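/- Let J_≥ = {f ∈ C^∞(ℝ) | f(x) = 0 for all x ≥ 0} and J_≤ = {f ∈ C^∞(ℝ) | f(x) = 0 for all x ≤ 0}. Then the C^∞(ℝ)-modules C^∞(ℝ)/J_≥ and C^∞(ℝ)/J_≤ are both fiber-determined, but their tensor product T = (C^∞(ℝ)/J_≥) ⊗_{C^∞(ℝ)} (C^∞(ℝ)/J_≤) is not: the element [1] ⊗ [id] of T (where id is the identity function x ↦ x) is nonzero and lies in I_m·T for every m ∈ ℝ. Thus the tensor product of two fiber-determined C^∞(M)-modules need not be fiber-determined. -/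

import Mathlib

open scoped Manifold TensorProduct

noncomputable section

/-- The ring `C^∞(ℝ)` of smooth real-valued functions on `ℝ`. -/
abbrev SmoothR : Type := C^(⊤ : ℕ∞)⟮modelWithCornersSelf ℝ ℝ, ℝ; ℝ⟯

/-- The ideal `I_m` of smooth functions vanishing at `m`. -/
def idealAtR (m : ℝ) : Ideal SmoothR :=
  RingHom.ker (ContMDiffMap.evalRingHom m)

/-- The ideal `J_≥` of smooth functions vanishing at all `x ≥ 0`. -/
def Jge : Ideal SmoothR where
  carrier := {f : SmoothR | ∀ x : ℝ, 0 ≤ x → f x = 0}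
  add_mem' := by intro a b ha hb x hx; simp [ha x hx, hb x hx]
  zero_mem' := by intro x hx; simp
  smul_mem' := by intro c f hf x hx; simp [smul_eq_mul, hf x hx]

/-- The ideal `J_≤` of smooth functions vanishing at all `x ≤ 0`. -/
def Jle : Ideal SmoothR where
  carrier := {f : SmoothR | ∀ x : ℝ, x ≤ 0 → f x = 0}
  add_mem' := by intro a b ha hb x hx; simp [ha x hx, hb x hx]
  zero_mem' := by intro x hx; simp
  smul_mem' := by intro c f hf x hx; simp [smul_eq_mul, hf x hx]

lemma mem_idealAtR {m : ℝ} {f : SmoothR} : f ∈ idealAtR m ↔ f m = 0 := Iff.rfl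

/-- Extract a representative in `I_m` from membership in `I_m • ⊤` of a quotient. -/
lemma quot_mem_smul {J : Ideal SmoothR} {m : ℝ} {q : SmoothR ⧸ J}
    (hq : q ∈ idealAtR m • (⊤ : Submodule SmoothR (SmoothR ⧸ J))) :
    ∃ g : SmoothR, g m = 0 ∧ Submodule.Quotient.mk g = q := by
  have h1 : idealAtR m • (⊤ : Submodule SmoothR (SmoothR ⧸ J))
      = Submodule.map J.mkQ (idealAtR m • ⊤) := by
    rw [Submodule.map_smul'', Submodule.map_top, Submodule.range_mkQ]
  have h2 : idealAtR m • (⊤ : Submodule SmoothR SmoothR) = idealAtR m := by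
    rw [smul_eq_mul, Ideal.mul_top]
  rw [h1, h2] at hq
  obtain ⟨g, hg, rfl⟩ := hq
  exact ⟨g, hg, rfl⟩

lemma deriv_zero_right {f : ℝ → ℝ} (hf : DifferentiableAt ℝ f 0)
    (h : ∀ x, 0 ≤ x → f x = 0) : deriv f 0 = 0 := by
  have h1 : HasDerivWithinAt f (deriv f 0) (Set.Ici 0) 0 :=
    hf.hasDerivAt.hasDerivWithinAt
  have h2 : HasDerivWithinAt f 0 (Set.Ici 0) 0 :=
    (hasDerivWithinAt_const (0:ℝ) (Set.Ici 0) (0:ℝ)).congr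
      (fun y hy => h y hy) (h 0 le_rfl)
  rw [← h1.derivWithin (uniqueDiffOn_Ici 0 0 Set.self_mem_Ici),
    h2.derivWithin (uniqueDiffOn_Ici 0 0 Set.self_mem_Ici)]

lemma deriv_zero_left {f : ℝ → ℝ} (hf : DifferentiableAt ℝ f 0)
    (h : ∀ x, x ≤ 0 → f x = 0) : deriv f 0 = 0 := by
  have h1 : HasDerivWithinAt f (deriv f 0) (Set.Iic 0) 0 :=
    hf.hasDerivAt.hasDerivWithinAt
  have h2 : HasDerivWithinAt f 0 (Set.Iic 0) 0 :=
    (hasDerivWithinAt_const (0:ℝ) (Set.Iic 0) (0:ℝ)).congr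
      (fun y hy => h y hy) (h 0 le_rfl)
  rw [← h1.derivWithin (uniqueDiffOn_Iic 0 0 Set.self_mem_Iic),
    h2.derivWithin (uniqueDiffOn_Iic 0 0 Set.self_mem_Iic)]

/-- Multiplication into the quotient by `Jge ⊔ Jle`, as a bilinear map. -/
def mulK : SmoothR →ₗ[SmoothR] SmoothR →ₗ[SmoothR] (SmoothR ⧸ (Jge ⊔ Jle)) :=
  (LinearMap.mul SmoothR SmoothR).compr₂ (Jge ⊔ Jle).mkQ

def L1 : (SmoothR ⧸ Jge) →ₗ[SmoothR] SmoothR →ₗ[SmoothR] (SmoothR ⧸ (Jge ⊔ Jle)) :=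
  Submodule.liftQ Jge mulK (by
    intro f hf
    simp only [LinearMap.mem_ker]
    refine LinearMap.ext fun g => ?_
    simp only [mulK, LinearMap.compr₂_apply, LinearMap.mul_apply', LinearMap.zero_apply,
      Submodule.mkQ_apply]
    rw [Submodule.Quotient.mk_eq_zero]
    exact Submodule.mem_sup_left (Ideal.mul_mem_right g Jge hf))

lemma L1_mk (f g : SmoothR) :
    L1 (Submodule.Quotient.mk f) g = Submodule.Quotient.mk (f * g) := rfl

def B : (SmoothR ⧸ Jge) →ₗ[SmoothR] (SmoothR ⧸ Jle) →ₗ[SmoothR] (SmoothR ⧸ (Jge ⊔ Jle)) :=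
  (Submodule.liftQ Jle L1.flip (by
    intro g hg
    simp only [LinearMap.mem_ker]
    refine LinearMap.ext fun q => ?_
    obtain ⟨f, rfl⟩ := Submodule.Quotient.mk_surjective _ q
    show L1 (Submodule.Quotient.mk f) g = 0
    rw [L1_mk, Submodule.Quotient.mk_eq_zero]
    exact Submodule.mem_sup_right (Ideal.mul_mem_left Jle f hg))).flip

lemma B_mk (f g : SmoothR) :
    B (Submodule.Quotient.mk f) (Submodule.Quotient.mk g) = Submodule.Quotient.mk (f * g) := rfl

/-- A smooth function vanishing at `m < 0` and equal to `1` on `[0, ∞)`. -/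
def phiNeg (m : ℝ) : SmoothR :=
  ⟨fun x => Real.smoothTransition (1 - x / m),
   (Real.smoothTransition.contDiff.comp (contDiff_const.sub (contDiff_id.div_const m))).contMDiff⟩

/-- A smooth function vanishing at `m ≥ 0` and equal to `id` on `(-∞, 0]`. -/
def gPos (m : ℝ) : SmoothR :=
  ⟨fun x => x * (1 - Real.smoothTransition (x / m)),
   (contDiff_id.mul (contDiff_const.sub
     (Real.smoothTransition.contDiff.comp (contDiff_id.div_const m)))).contMDiff⟩

/-- The `C^∞(ℝ)`-modules `C^∞(ℝ)/J_≥` and `C^∞(ℝ)/J_≤` are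
fiber-determined, but their tensor product `T` is not: the element `[1] ⊗ [id]` is a
nonzero invisible element of `T`. -/
theorem tensorProduct_of_fiberDetermined_not_fiberDetermined :
    (∀ q : SmoothR ⧸ Jge,
      (∀ m : ℝ, q ∈ idealAtR m • (⊤ : Submodule SmoothR (SmoothR ⧸ Jge))) → q = 0) ∧
    (∀ q : SmoothR ⧸ Jle,
      (∀ m : ℝ, q ∈ idealAtR m • (⊤ : Submodule SmoothR (SmoothR ⧸ Jle))) → q = 0) ∧
    ((Submodule.Quotient.mk (1 : SmoothR) ⊗ₜ[SmoothR]
        Submodule.Quotient.mk (ContMDiffMap.id : SmoothR)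
        : (SmoothR ⧸ Jge) ⊗[SmoothR] (SmoothR ⧸ Jle)) ≠ 0) ∧
    (∀ m : ℝ,
      (Submodule.Quotient.mk (1 : SmoothR) ⊗ₜ[SmoothR]
          Submodule.Quotient.mk (ContMDiffMap.id : SmoothR)
          : (SmoothR ⧸ Jge) ⊗[SmoothR] (SmoothR ⧸ Jle)) ∈
        idealAtR m •
          (⊤ : Submodule SmoothR ((SmoothR ⧸ Jge) ⊗[SmoothR] (SmoothR ⧸ Jle)))) := by
  refine ⟨?_, ?_, ?_, ?_⟩
  · -- C∞/Jge is fiber-determined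
    intro q hq
    obtain ⟨f, rfl⟩ := Submodule.Quotient.mk_surjective _ q
    rw [Submodule.Quotient.mk_eq_zero]
    intro x hx
    obtain ⟨g, hg, hfg⟩ := quot_mem_smul (hq x)
    rw [Submodule.Quotient.eq] at hfg
    have h3 := hfg x hx
    simp at h3
    linarith [hg, h3]
  · intro q hq
    obtain ⟨f, rfl⟩ := Submodule.Quotient.mk_surjective _ q
    rw [Submodule.Quotient.mk_eq_zero]
    intro x hx
    obtain ⟨g, hg, hfg⟩ := quot_mem_smul (hq x)
    rw [Submodule.Quotient.eq] at hfg
    have h3 := hfg x hx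
    simp at h3
    linarith [hg, h3]
  · -- [1] ⊗ [id] ≠ 0
    intro h0
    have h1 := congrArg (TensorProduct.lift B) h0
    rw [TensorProduct.lift.tmul, B_mk, one_mul, LinearMap.map_zero,
      Submodule.Quotient.mk_eq_zero, Submodule.mem_sup] at h1
    obtain ⟨g, hg, h, hh, hgh⟩ := h1
    have hgd : Differentiable ℝ (g : ℝ → ℝ) :=
      (g.contMDiff.contDiff : ContDiff ℝ (⊤:ℕ∞) g).differentiable (by simp)
    have hhd : Differentiable ℝ (h : ℝ → ℝ) :=
      (h.contMDiff.contDiff : ContDiff ℝ (⊤:ℕ∞) h).differentiable (by simp)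
    have hfun : (fun x : ℝ => (g : ℝ → ℝ) x + (h : ℝ → ℝ) x) = fun x : ℝ => x := by
      funext x
      have := congrArg (fun k : SmoothR => k x) hgh
      simp at this; exact this
    have hd : deriv (fun x : ℝ => (g : ℝ → ℝ) x + (h : ℝ → ℝ) x) 0 = 1 := by
      rw [hfun]; simp
    rw [deriv_fun_add (hgd 0) (hhd 0), deriv_zero_right (hgd 0) hg,
      deriv_zero_left (hhd 0) hh] at hd
    norm_num at hd
  · -- invisibility
    intro m
    rcases lt_or_ge m 0 with hm | hm
    · -- use phiNeg m
      have hmem : phiNeg m ∈ idealAtR m := by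
        rw [mem_idealAtR]
        show Real.smoothTransition (1 - m / m) = 0
        rw [div_self hm.ne, sub_self, Real.smoothTransition.zero]
      have hkey : (Submodule.Quotient.mk (1 : SmoothR) : SmoothR ⧸ Jge)
          = phiNeg m • Submodule.Quotient.mk (1 : SmoothR) := by
        rw [← Submodule.Quotient.mk_smul, Submodule.Quotient.eq]
        intro x hx
        have hx' : (1 : ℝ) ≤ 1 - x / m := by
          have : x / m ≤ 0 := div_nonpos_of_nonneg_of_nonpos hx hm.le
          linarith
        have hφ : phiNeg m x = 1 := Real.smoothTransition.one_of_one_le hx'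
        simp [smul_eq_mul, hφ]
      have heq : (Submodule.Quotient.mk (1 : SmoothR) ⊗ₜ[SmoothR]
            Submodule.Quotient.mk (ContMDiffMap.id : SmoothR)
            : (SmoothR ⧸ Jge) ⊗[SmoothR] (SmoothR ⧸ Jle))
          = phiNeg m • (Submodule.Quotient.mk (1 : SmoothR) ⊗ₜ[SmoothR]
              Submodule.Quotient.mk (ContMDiffMap.id : SmoothR)) := by
        rw [TensorProduct.smul_tmul', ← hkey]
      rw [heq]
      exact Submodule.smul_mem_smul hmem Submodule.mem_top
    · -- use gPos m
      have hmem : gPos m ∈ idealAtR m := by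
        rw [mem_idealAtR]
        show m * (1 - Real.smoothTransition (m / m)) = 0
        rcases eq_or_lt_of_le hm with rfl | hm'
        · simp
        · rw [div_self hm'.ne', Real.smoothTransition.one]; ring
      have hkey : (Submodule.Quotient.mk (ContMDiffMap.id : SmoothR) : SmoothR ⧸ Jle)
          = gPos m • Submodule.Quotient.mk (1 : SmoothR) := by
        rw [← Submodule.Quotient.mk_smul, Submodule.Quotient.eq]
        intro x hx
        have h0 : Real.smoothTransition (x / m) = 0 :=
          Real.smoothTransition.zero_of_nonpos (div_nonpos_of_nonpos_of_nonneg hx hm)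
        have : gPos m x = x := by
          show x * (1 - Real.smoothTransition (x / m)) = x
          rw [h0]; ring
        simp only [smul_eq_mul]
        simp [this]
        exact sub_eq_zero.mpr rfl
      have heq : (Submodule.Quotient.mk (1 : SmoothR) ⊗ₜ[SmoothR]
            Submodule.Quotient.mk (ContMDiffMap.id : SmoothR)
            : (SmoothR ⧸ Jge) ⊗[SmoothR] (SmoothR ⧸ Jle))
          = gPos m • (Submodule.Quotient.mk (1 : SmoothR) ⊗ₜ[SmoothR]
              Submodule.Quotient.mk (1 : SmoothR)) := by
        rw [← TensorProduct.tmul_smul, ← hkey]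
      rw [heq]
      exact Submodule.smul_mem_smul hmem Submodule.mem_top
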